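/- Suppose X ∈ ℝ^{n×p} has the self-regularizing property: there exists a unit vector w ∈ ℝⁿ with h := Xᵀw/√n ⪰ τ·1 for a constant τ > 0. Let Π = I − wwᵀ. Then for every ε ∈ ℝⁿ and every β ∈ ℝ^p, the identity (1/n)‖ε − Xβ‖₂² = (1/n)‖ε − ΠXβ‖₂² + (hᵀβ)² − (2 εᵀw/√n)(hᵀβ) holds; in particular, for β ⪰ 0 one has hᵀβ ≥ τ·1ᵀβ, so the least-squares objective decomposes into a fitting term with modified design ΠX, a squared penalty (hᵀβ)² ≥ τ²(1ᵀβ)², and a cross term. -/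

import Mathlib

open Matrix Finset

noncomputable section

/-- Squared Euclidean norm of a vector. -/
def sqNorm {n : ℕ} (v : Fin n → ℝ) : ℝ := ∑ i, (v i) ^ 2

/-
With `c = w ⬝ᵥ Xβ`, the matrix `Π = I − wwᵀ` sends `Xβ` to `Xβ − c w`, so
`ε − ΠXβ = (ε − Xβ) + c w`. Expanding this square with `‖w‖ = 1` gives
`‖ε − Xβ‖² = ‖ε − ΠXβ‖² + c² − 2 c (ε ⬝ᵥ w)`, and `c = √n (hᵀβ)` because `hᵀβ = wᵀXβ / √n`.
The lower bound `hᵀβ ≥ τ 1ᵀβ` for `β ⪰ 0` is termwise.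
-/

theorem sqNorm_eq_dotProduct {n : ℕ} (v : Fin n → ℝ) : sqNorm v = v ⬝ᵥ v := by
  simp only [sqNorm, dotProduct, sq]

theorem sqNorm_add {n : ℕ} (a b : Fin n → ℝ) :
    sqNorm (a + b) = sqNorm a + 2 * (a ⬝ᵥ b) + sqNorm b := by
  simp only [sqNorm_eq_dotProduct, add_dotProduct, dotProduct_add, dotProduct_comm b a]
  ring

theorem sqNorm_smul {n : ℕ} (c : ℝ) (v : Fin n → ℝ) : sqNorm (c • v) = c ^ 2 * sqNorm v := by
  simp only [sqNorm_eq_dotProduct, smul_dotProduct, dotProduct_smul, smul_eq_mul]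
  ring

theorem one_sub_vecMulVec_self_mulVec {ι R : Type*} [Fintype ι] [DecidableEq ι] [CommRing R]
    (w v : ι → R) : (1 - vecMulVec w w) *ᵥ v = v - (w ⬝ᵥ v) • w := by
  rw [sub_mulVec, one_mulVec, vecMulVec_mulVec, op_smul_eq_smul]

theorem sqNorm_sub_eq_sqNorm_sub_proj {n : ℕ} {w : Fin n → ℝ} (hw : sqNorm w = 1)
    (ε v : Fin n → ℝ) :
    sqNorm (ε - v) = sqNorm (ε - (v - (w ⬝ᵥ v) • w)) + (w ⬝ᵥ v) ^ 2
      - 2 * (ε ⬝ᵥ w) * (w ⬝ᵥ v) := by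
  have hsplit : ε - (v - (w ⬝ᵥ v) • w) = (ε - v) + (w ⬝ᵥ v) • w := by abel
  have hcross : (ε - v) ⬝ᵥ w = ε ⬝ᵥ w - w ⬝ᵥ v := by
    rw [sub_dotProduct, dotProduct_comm v w]
  rw [hsplit, sqNorm_add, sqNorm_smul, hw, dotProduct_smul, hcross, smul_eq_mul]
  ring

theorem dotProduct_transpose_mulVec_div {m n : Type*} [Fintype m] [Fintype n]
    (X : Matrix m n ℝ) (w : m → ℝ) (β : n → ℝ) (c : ℝ) :
    (fun j => (Xᵀ *ᵥ w) j / c) ⬝ᵥ β = (w ⬝ᵥ X *ᵥ β) / c := by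
  calc (fun j => (Xᵀ *ᵥ w) j / c) ⬝ᵥ β = (Xᵀ *ᵥ w ⬝ᵥ β) / c := by
        simp only [dotProduct, div_mul_eq_mul_div, Finset.sum_div]
    _ = (w ⬝ᵥ X *ᵥ β) / c := by rw [mulVec_transpose, dotProduct_mulVec]

theorem mul_sum_le_dotProduct {ι : Type*} [Fintype ι] {τ : ℝ} {h β : ι → ℝ}
    (hτ : ∀ j, τ ≤ h j) (hβ : ∀ j, 0 ≤ β j) : τ * ∑ j, β j ≤ h ⬝ᵥ β := by
  rw [Finset.mul_sum]
  exact Finset.sum_le_sum fun j _ => mul_le_mul_of_nonneg_right (hτ j) (hβ j)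

theorem stmt_3_general (n p : ℕ) (X : Matrix (Fin n) (Fin p) ℝ)
    (τ : ℝ) (hτ : 0 < τ) (w : Fin n → ℝ) (hw : sqNorm w = 1)
    (h : Fin p → ℝ) (hh : h = fun j => (X.transpose.mulVec w) j / Real.sqrt n)
    (hsep : ∀ j, τ ≤ h j)
    (P : Matrix (Fin n) (Fin n) ℝ) (hP : P = 1 - Matrix.vecMulVec w w) :
    (∀ (ε : Fin n → ℝ) (β : Fin p → ℝ),
      (1 / (n : ℝ)) * sqNorm (ε - X.mulVec β)
        = (1 / (n : ℝ)) * sqNorm (ε - (P * X).mulVec β) + (h ⬝ᵥ β) ^ 2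
          - (2 * (ε ⬝ᵥ w) / Real.sqrt n) * (h ⬝ᵥ β)) ∧
    (∀ β : Fin p → ℝ, (∀ j, 0 ≤ β j) →
      τ * ∑ j, β j ≤ h ⬝ᵥ β ∧ τ ^ 2 * (∑ j, β j) ^ 2 ≤ (h ⬝ᵥ β) ^ 2) := by
  have hsqrt : Real.sqrt n ^ 2 = n := Real.sq_sqrt n.cast_nonneg
  refine ⟨fun ε β => ?_, fun β hβ => ?_⟩
  · have hPX : (P * X) *ᵥ β = X *ᵥ β - (w ⬝ᵥ X *ᵥ β) • w := by
      rw [hP, ← mulVec_mulVec, one_sub_vecMulVec_self_mulVec]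
    rw [hPX, sqNorm_sub_eq_sqNorm_sub_proj hw, hh, dotProduct_transpose_mulVec_div]
    -- `1 / n = 1 / √n ^ 2` also holds for `n = 0`, where both sides are `0`.
    generalize Real.sqrt n = s at hsqrt ⊢
    rw [← hsqrt]
    ring
  · have hlow := mul_sum_le_dotProduct hsep hβ
    have hnonneg : 0 ≤ τ * ∑ j, β j := mul_nonneg hτ.le (Finset.sum_nonneg fun j _ => hβ j)
    exact ⟨hlow, mul_pow τ (∑ j, β j) 2 ▸ pow_le_pow_left₀ hnonneg hlow 2⟩

/-- the self-regularizing decomposition of the least-squares objective.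
If `w` is a unit vector with `h = Xᵀw/√n ⪰ τ·1`, `τ > 0`, and `Π = I − wwᵀ`, then
`(1/n)‖ε − Xβ‖₂² = (1/n)‖ε − ΠXβ‖₂² + (hᵀβ)² − (2εᵀw/√n)(hᵀβ)` for all `ε, β`,
and for `β ⪰ 0` one has `hᵀβ ≥ τ·1ᵀβ`, hence `(hᵀβ)² ≥ τ²(1ᵀβ)²`. -/
theorem stmt_3 (n p : ℕ) (hn : 0 < n) (X : Matrix (Fin n) (Fin p) ℝ)
    (τ : ℝ) (hτ : 0 < τ) (w : Fin n → ℝ) (hw : sqNorm w = 1)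
    (h : Fin p → ℝ) (hh : h = fun j => (X.transpose.mulVec w) j / Real.sqrt n)
    (hsep : ∀ j, τ ≤ h j)
    (P : Matrix (Fin n) (Fin n) ℝ) (hP : P = 1 - Matrix.vecMulVec w w) :
    (∀ (ε : Fin n → ℝ) (β : Fin p → ℝ),
      (1 / (n : ℝ)) * sqNorm (ε - X.mulVec β)
        = (1 / (n : ℝ)) * sqNorm (ε - (P * X).mulVec β) + (h ⬝ᵥ β) ^ 2
          - (2 * (ε ⬝ᵥ w) / Real.sqrt n) * (h ⬝ᵥ β)) ∧
    (∀ β : Fin p → ℝ, (∀ j, 0 ≤ β j) →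
      τ * ∑ j, β j ≤ h ⬝ᵥ β ∧ τ ^ 2 * (∑ j, β j) ^ 2 ≤ (h ⬝ᵥ β) ^ 2) :=
  stmt_3_general n p X τ hτ w hw h hh hsep P hP
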